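/- arXiv:1408.5358 — 2 statements merged into one kernel-verified Lean document; each statement's English description precedes it below -/
import Mathlib

section
/- Let $k$ be a field, $M$ a finitely generated abelian group, and $R$ a finitely generated $M$-graded $k$-algebra. For any homomorphism of finitely generated abelian groups $\varphi\colon M' \to M$, the pullback algebra $\varphi^* R := \bigoplus_{m' \in M'} R_{\varphi(m')}$, with multiplication $(m_1', r_1)\cdot(m_2',r_2) = (m_1'+m_2', r_1 r_2)$, is finitely generated as a $k$-algebra. -/
/-!
Twist the `M'`-grading of the monoid algebra `R[M']` by `φ`: give `r • X^m'` with `r ∈ R_d` the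
`M`-degree `d - φ m'`. Then `R[M'] = R ⊗ k[M']` is a finitely generated `M`-graded `k`-algebra whose
degree-zero part is `φ*R`. In any finitely generated algebra graded by a cancellative monoid, the
degree-zero part is spanned by the degree-zero monomials in finitely many homogeneous generators,
and by Gordan's lemma their exponent vectors form a finitely generated monoid.
-/

open scoped DirectSum

variable {k R M M' : Type*}

section
variable [Field k] [CommRing R] [Algebra k R]
    [AddCommGroup M] [DecidableEq M] [AddCommGroup M']
    (𝒜 : M → Submodule k R) [GradedAlgebra 𝒜] (φ : M' →+ M)

lemma gradedPullback_one_mem (m' : M') :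
    (1 : AddMonoidAlgebra R M').coeff m' ∈ 𝒜 (φ m') := by
  classical
  rw [AddMonoidAlgebra.one_def, AddMonoidAlgebra.coeff_single]
  by_cases h : (0 : M') = m'
  · subst h
    rw [Finsupp.single_apply, if_pos rfl, map_zero]
    exact SetLike.one_mem_graded 𝒜
  · rw [Finsupp.single_apply, if_neg h]
    exact zero_mem _

/-- The pullback `φ*R = ⊕_{m' ∈ M'} R_{φ(m')}` of an `M`-graded algebra `R`
along a homomorphism `φ : M' → M`, realized as the subalgebra of the monoid
algebra `R[M']` consisting of those elements whose coefficient at `m'` is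
homogeneous of degree `φ(m')`.  Its multiplication is
`(m₁', r₁)·(m₂', r₂) = (m₁' + m₂', r₁r₂)`. -/
def gradedPullback : Subalgebra k (AddMonoidAlgebra R M') where
  carrier := {f | ∀ m' : M', f.coeff m' ∈ 𝒜 (φ m')}
  add_mem' := by
    intro f g hf hg m'
    simpa using add_mem (hf m') (hg m')
  zero_mem' := by
    intro m'
    simp only [AddMonoidAlgebra.coeff_zero, Finsupp.coe_zero, Pi.zero_apply]
    exact zero_mem _
  mul_mem' := by
    classical
    intro f g hf hg m'
    rw [AddMonoidAlgebra.coeff_mul]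
    refine Submodule.sum_mem _ fun a₁ _ => Submodule.sum_mem _ fun a₂ _ => ?_
    by_cases h : a₁ + a₂ = m'
    · have hm := SetLike.mul_mem_graded (hf a₁) (hg a₂)
      rw [← map_add, h] at hm
      simpa [h] using hm
    · simp [h]
  one_mem' := fun m' => gradedPullback_one_mem 𝒜 φ m'
  algebraMap_mem' := by
    intro c m'
    rw [Algebra.algebraMap_eq_smul_one, AddMonoidAlgebra.coeff_smul_apply]
    exact Submodule.smul_mem _ _ (gradedPullback_one_mem 𝒜 φ m')

end

section GradeZero

variable {A ι : Type*}

theorem DirectSum.Decomposition.exists_finset_adjoin_eq_top_and_homogeneous [CommSemiring k]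
    [Semiring A] [Algebra k A] [DecidableEq ι] (𝒜 : ι → Submodule k A)
    [DirectSum.Decomposition 𝒜] [Algebra.FiniteType k A] :
    ∃ s : Finset A, Algebra.adjoin k (s : Set A) = ⊤ ∧
      ∀ x ∈ s, SetLike.IsHomogeneousElem 𝒜 x := by
  classical
  obtain ⟨t, ht⟩ := Algebra.FiniteType.out (R := k) (A := A)
  refine ⟨t.biUnion fun x => (DirectSum.decompose 𝒜 x).support.image
    fun i => (DirectSum.decompose 𝒜 x i : A), ?_, ?_⟩
  · rw [← top_le_iff, ← ht, Algebra.adjoin_le_iff]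
    intro x hx
    rw [← DirectSum.sum_support_decompose 𝒜 x]
    exact sum_mem fun i hi => Algebra.subset_adjoin
      (Finset.mem_biUnion.mpr ⟨x, hx, Finset.mem_image_of_mem _ hi⟩)
  · simp only [Finset.mem_biUnion, Finset.mem_image]
    rintro _ ⟨x, -, i, -, rfl⟩
    exact ⟨i, (DirectSum.decompose 𝒜 x i).2⟩

theorem MvPolynomial.aeval_monomial_mem_graded {σ : Type*} [CommSemiring k] [CommSemiring A]
    [Algebra k A] [AddCommMonoid ι] (𝒜 : ι → Submodule k A) [SetLike.GradedMonoid 𝒜]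
    {x : σ → A} {deg : σ → ι} (hx : ∀ i, x i ∈ 𝒜 (deg i)) (a : σ →₀ ℕ) (c : k) :
    aeval x (monomial a c) ∈ 𝒜 (Finsupp.weight deg a) := by
  rw [aeval_monomial, ← Algebra.smul_def, Finsupp.weight_apply]
  exact Submodule.smul_mem _ _ (SetLike.prod_pow_mem_graded 𝒜 deg x _ fun i _ => hx i)

theorem GradedAlgebra.fg_gradeZero_subalgebra [CommSemiring k] [CommSemiring A] [Algebra k A]
    [AddCancelCommMonoid ι] [DecidableEq ι] (𝒜 : ι → Submodule k A) [GradedAlgebra 𝒜]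
    [Algebra.FiniteType k A] :
    (SetLike.GradeZero.subalgebra 𝒜).FG := by
  classical
  obtain ⟨s, hs, hhom⟩ := DirectSum.Decomposition.exists_finset_adjoin_eq_top_and_homogeneous 𝒜
  choose deg hdeg using fun x : s => hhom x x.2
  have hmon := MvPolynomial.aeval_monomial_mem_graded 𝒜 (x := ((↑) : s → A)) hdeg
  set mon : (s →₀ ℕ) → A := fun a => MvPolynomial.aeval (↑) (MvPolynomial.monomial a (1 : k))
  -- Gordan's lemma: the exponents of the degree-zero monomials form a finitely generated monoid
  obtain ⟨T, hT⟩ := AddSubmonoid.fg_eqLocusM (Finsupp.weight deg : (s →₀ ℕ) →+ ι) 0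
  have hmon_adjoin : ∀ a ∈ AddSubmonoid.closure (T : Set (s →₀ ℕ)),
      mon a ∈ Algebra.adjoin k (mon '' T) := by
    intro a ha
    induction ha using AddSubmonoid.closure_induction with
    | mem a ha => exact Algebra.subset_adjoin ⟨a, ha, rfl⟩
    | zero => simp [mon, one_mem]
    | add a b _ _ ha hb =>
      have : mon (a + b) = mon a * mon b := by simp [mon, ← map_mul, MvPolynomial.monomial_mul]
      exact this ▸ mul_mem ha hb
  refine ⟨T.image mon, le_antisymm ?_ fun f hf => ?_⟩ <;> rw [Finset.coe_image]
  · rw [Algebra.adjoin_le_iff]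
    rintro _ ⟨a, ha, rfl⟩
    have ha0 : a ∈ (Finsupp.weight deg : (s →₀ ℕ) →+ ι).eqLocusM 0 :=
      hT ▸ AddSubmonoid.subset_closure ha
    have := hmon a 1
    rwa [ha0] at this
  · have hf_range : f ∈ (MvPolynomial.aeval (R := k) ((↑) : s → A)).range := by
      rw [← Algebra.adjoin_range_eq_range_aeval, Subtype.range_coe_subtype,
        Finset.setOfPred_mem, hs]
      trivial
    obtain ⟨p, rfl⟩ := (AlgHom.mem_range _).mp hf_range
    rw [← DirectSum.decompose_of_mem_same 𝒜 hf, ← GradedAlgebra.proj_apply, p.as_sum, map_sum,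
      map_sum]
    refine sum_mem fun a _ => ?_
    rw [← mul_one (p.coeff a), ← smul_eq_mul, ← MvPolynomial.smul_monomial, map_smul, map_smul]
    refine Subalgebra.smul_mem _ ?_ _
    rw [GradedAlgebra.proj_apply]
    by_cases ha : Finsupp.weight deg a = 0
    · rw [DirectSum.decompose_of_mem_same 𝒜 (ha ▸ hmon a 1)]
      exact hmon_adjoin a (hT ▸ ha)
    · rw [DirectSum.decompose_of_mem_ne 𝒜 (hmon a 1) ha]
      exact zero_mem _

end GradeZero

section PullbackGrading

variable [CommRing k] [CommRing R] [Algebra k R] [AddCommGroup M] [AddCommGroup M']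
    (𝒜 : M → Submodule k R) (φ : M' →+ M)

/-- The `M`-grading of `R[M']` in which `r • X^m'` with `r ∈ 𝒜 d` has degree `d - φ m'`. -/
def pullbackGrading (m : M) : Submodule k (AddMonoidAlgebra R M') where
  carrier := {f | ∀ m', f.coeff m' ∈ 𝒜 (m + φ m')}
  add_mem' hf hg m' := add_mem (hf m') (hg m')
  zero_mem' _ := zero_mem _
  smul_mem' c _ hf m' := Submodule.smul_mem _ c (hf m')

theorem single_mem_pullbackGrading {m : M} {m' : M'} {r : R} (hr : r ∈ 𝒜 (m + φ m')) :
    AddMonoidAlgebra.single m' r ∈ pullbackGrading 𝒜 φ m := by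
  classical
  intro n
  rw [AddMonoidAlgebra.coeff_single, Finsupp.single_apply]
  split_ifs with h
  · exact h ▸ hr
  · exact zero_mem _

instance [SetLike.GradedMonoid 𝒜] : SetLike.GradedMonoid (pullbackGrading 𝒜 φ) where
  one_mem := single_mem_pullbackGrading 𝒜 φ (by simpa using SetLike.one_mem_graded 𝒜)
  mul_mem m₁ m₂ f g hf hg m' := by
    classical
    rw [AddMonoidAlgebra.coeff_mul]
    refine Submodule.sum_mem _ fun a₁ _ => Submodule.sum_mem _ fun a₂ _ => ?_
    dsimp only
    split_ifs with h
    · have hdeg : m₁ + φ a₁ + (m₂ + φ a₂) = m₁ + m₂ + φ m' := by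
        rw [← h, map_add]; abel
      exact hdeg ▸ SetLike.mul_mem_graded (hf a₁) (hg a₂)
    · exact zero_mem _

variable [DecidableEq M] [DirectSum.Decomposition 𝒜]

theorem decompose_coeff_coeAddMonoidHom_pullbackGrading (x : ⨁ m, pullbackGrading 𝒜 φ m)
    (m : M) (m' : M') :
    (DirectSum.decompose 𝒜 ((DirectSum.coeAddMonoidHom (pullbackGrading 𝒜 φ) x).coeff m')
      (m + φ m') : R) = (x m : AddMonoidAlgebra R M').coeff m' := by
  induction x using DirectSum.induction_on with
  | zero => simp
  | of n f =>
    rw [DirectSum.coeAddMonoidHom_of]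
    by_cases h : n = m
    · subst h
      rw [DirectSum.of_eq_same, DirectSum.decompose_of_mem_same 𝒜 (f.2 m')]
    · rw [DirectSum.of_eq_of_ne _ _ _ (Ne.symm h), DirectSum.decompose_of_mem_ne 𝒜 (f.2 m')
        (fun h' => h (add_right_cancel h'))]
      rfl
  | add x y hx hy =>
    simp only [map_add, AddMonoidAlgebra.coeff_add, Finsupp.add_apply, DirectSum.decompose_add,
      DirectSum.add_apply, Submodule.coe_add, hx, hy]

theorem iSup_pullbackGrading_eq_top : ⨆ m, pullbackGrading 𝒜 φ m = ⊤ := by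
  rw [eq_top_iff]
  rintro f -
  induction f using AddMonoidAlgebra.induction_linear with
  | zero => exact zero_mem _
  | add f g hf hg => exact add_mem hf hg
  | single m' r =>
    have hr : r ∈ ⨆ d, 𝒜 d :=
      (DirectSum.Decomposition.isInternal 𝒜).submodule_iSup_eq_top ▸ Submodule.mem_top
    refine Submodule.iSup_induction 𝒜 (motive := fun r => _ ∈ ⨆ m, pullbackGrading 𝒜 φ m) hr
      (fun d r hr => ?_) (by simp) (fun r s hr hs => ?_)
    · exact Submodule.mem_iSup_of_mem (d - φ m')
        (single_mem_pullbackGrading 𝒜 φ (by rwa [sub_add_cancel]))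
    · simpa [AddMonoidAlgebra.single_add] using add_mem hr hs

theorem isInternal_pullbackGrading : DirectSum.IsInternal (pullbackGrading 𝒜 φ) := by
  refine ⟨(injective_iff_map_eq_zero _).mpr fun x hx => ?_, ?_⟩
  · ext m m'
    simpa [hx] using (decompose_coeff_coeAddMonoidHom_pullbackGrading 𝒜 φ x m m').symm
  · change Function.Surjective (DirectSum.coeLinearMap (pullbackGrading 𝒜 φ))
    rw [← LinearMap.range_eq_top, DirectSum.range_coeLinearMap, iSup_pullbackGrading_eq_top]

end PullbackGrading

noncomputable instance [CommRing k] [CommRing R] [Algebra k R] [AddCommGroup M] [DecidableEq M]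
    [AddCommGroup M'] (𝒜 : M → Submodule k R) [GradedAlgebra 𝒜] (φ : M' →+ M) :
    GradedAlgebra (pullbackGrading 𝒜 φ) where
  toDecomposition := (isInternal_pullbackGrading 𝒜 φ).chooseDecomposition

theorem gradeZero_subalgebra_pullbackGrading [Field k] [CommRing R] [Algebra k R]
    [AddCommGroup M] [DecidableEq M] [AddCommGroup M'] (𝒜 : M → Submodule k R)
    [GradedAlgebra 𝒜] (φ : M' →+ M) :
    SetLike.GradeZero.subalgebra (pullbackGrading 𝒜 φ) = gradedPullback 𝒜 φ :=
  Subalgebra.ext fun _ => forall_congr' fun m' => by rw [zero_add]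

theorem stmt_0_general [Field k] [CommRing R] [Algebra k R]
    [AddCommGroup M] [DecidableEq M] [AddCommGroup M']
    (hM' : AddGroup.FG M')
    (𝒜 : M → Submodule k R) [GradedAlgebra 𝒜]
    (hR : Algebra.FiniteType k R)
    (φ : M' →+ M) :
    (gradedPullback 𝒜 φ).FG := by
  have : AddMonoid.FG M' := AddGroup.fg_iff_addMonoid_fg.mp hM'
  have : Algebra.FiniteType k (AddMonoidAlgebra R M') := hR.trans inferInstance
  rw [← gradeZero_subalgebra_pullbackGrading]
  exact GradedAlgebra.fg_gradeZero_subalgebra (pullbackGrading 𝒜 φ)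

/-- If `R` is a finitely generated `M`-graded `k`-algebra and `φ : M' → M` is a
homomorphism of finitely generated abelian groups, then the pullback algebra
`φ*R = ⊕_{m' ∈ M'} R_{φ(m')}` is a finitely generated `k`-algebra. -/
theorem stmt_0 [Field k] [CommRing R] [Algebra k R]
    [AddCommGroup M] [DecidableEq M] [AddCommGroup M']
    (hM : AddGroup.FG M) (hM' : AddGroup.FG M')
    (𝒜 : M → Submodule k R) [GradedAlgebra 𝒜]
    (hR : Algebra.FiniteType k R)
    (φ : M' →+ M) :
    (gradedPullback 𝒜 φ).FG :=
  stmt_0_general hM' 𝒜 hR φ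
end

section
/- Let $k$ be a field with separable closure $\bar{k}$ and Galois group $\Gamma$, and let $A$ be a $\bar{k}$-algebra with a semilinear continuous $\Gamma$-action (i.e., $g(\lambda a) = g(\lambda) g(a)$ for $\lambda \in \bar{k}$, $a \in A$, and every element has open stabilizer). Then the natural map $A^\Gamma \otimes_k \bar{k} \to A$ is an isomorphism of $\bar{k}$-algebras, where $A^\Gamma$ is the subring of $\Gamma$-invariant elements. -/
/-!
Injectivity: if invariant elements `v i` were `k`-independent but `K`-dependent, take a relation
of minimal length normalised to have a coefficient `1`. Applying `g ∈ Gal(K/k)` and subtracting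
gives a shorter relation, so all coefficients are Galois-fixed, i.e. lie in `k`, a contradiction.

Surjectivity: `a` is fixed by `Gal(K/L)` for a finite normal `L/k`. For `μ ∈ L` the trace
`∑_{σ ∈ Gal(L/k)} σ (μ • a) = ∑_σ σ μ • σ a` is invariant. A `K`-linear functional vanishing
on the invariants therefore vanishes on every `σ a` by Dedekind's independence of the
characters `σ : L → K`, in particular on `a`; so `a` lies in the `K`-span of the invariants.
-/

open scoped TensorProduct

variable {k K A : Type*} [Field k] [Field K] [Algebra k K]
  [CommRing A] [Algebra K A] [Algebra k A] [IsScalarTower k K A]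

/-- The `k`-subalgebra of invariants of a semilinear action
`ρ : Γ → Aut(A)` of the Galois group `Γ = Aut(K/k)` on a `K`-algebra `A`. -/
def galInvariants (ρ : (K ≃ₐ[k] K) →* (A ≃+* A))
    (hsemi : ∀ (g : K ≃ₐ[k] K) (c : K) (a : A), ρ g (c • a) = g c • ρ g a) :
    Subalgebra k A where
  carrier := {a | ∀ g : K ≃ₐ[k] K, ρ g a = a}
  add_mem' := by
    intro a b ha hb g
    rw [map_add, ha g, hb g]
  mul_mem' := by
    intro a b ha hb g
    rw [map_mul, ha g, hb g]
  one_mem' := fun g => map_one (ρ g)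
  algebraMap_mem' := by
    intro c g
    have h1 : algebraMap k A c = algebraMap k K c • (1 : A) := by
      rw [IsScalarTower.algebraMap_apply k K A, Algebra.algebraMap_eq_smul_one]
    rw [h1, hsemi g (algebraMap k K c) 1, map_one, AlgEquiv.commutes]

open Function IntermediateField

theorem linearIndependent_algEquiv_apply (L : IntermediateField k K) :
    LinearIndependent K (fun (σ : Gal(L/k)) (x : L) => (σ x : K)) :=
  (linearIndependent_monoidHom L K).comp
    (fun σ : Gal(L/k) => (L.val : L →* K).comp (σ : L →* L))
    (fun _ _ h => AlgEquiv.ext fun x => Subtype.val_injective (DFunLike.congr_fun h x))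

theorem Subalgebra.injective_productMap_of_linearIndependent (V : Subalgebra k A) {ι : Type*}
    (b : Module.Basis ι k V) (hb : LinearIndependent K fun i => (b i : A)) :
    Injective (Algebra.TensorProduct.productMap V.val (IsScalarTower.toAlgHom k K A)) := by
  set ψ : K ⊗[k] V →ₗ[K] A := V.val.toLinearMap.liftBaseChange K
  have hψb : ψ ∘ b.baseChange K = fun i => (b i : A) := funext fun i => by simp [ψ]
  have hψ : Injective ψ :=
    LinearMap.injective_of_linearIndependent (b.baseChange K).span_eq (hψb ▸ hb)
  have hcomm : (Algebra.TensorProduct.productMap V.val (IsScalarTower.toAlgHom k K A)).toLinearMap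
      = ψ.restrictScalars k ∘ₗ (TensorProduct.comm k V K).toLinearMap := by
    ext v c
    simp [ψ, Algebra.smul_def, mul_comm]
  rw [← AlgHom.coe_toLinearMap, hcomm, LinearMap.coe_comp]
  exact hψ.comp (TensorProduct.comm k V K).injective

theorem Subalgebra.span_subset_range_productMap (V : Subalgebra k A) :
    (Submodule.span K (V : Set A) : Set A) ⊆
      Set.range (Algebra.TensorProduct.productMap V.val (IsScalarTower.toAlgHom k K A)) := by
  intro a ha
  induction ha using Submodule.span_induction with
  | mem v hv => exact ⟨⟨v, hv⟩ ⊗ₜ 1, by simp⟩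
  | zero => exact ⟨0, map_zero _⟩
  | add x y _ _ hx hy =>
    obtain ⟨x, rfl⟩ := hx
    obtain ⟨y, rfl⟩ := hy
    exact ⟨x + y, map_add _ x y⟩
  | smul c x _ hx =>
    obtain ⟨x, rfl⟩ := hx
    exact ⟨x * (1 ⊗ₜ c), by simp [Algebra.smul_def, mul_comm]⟩

theorem linearIndependent_of_forall_map_eq [IsGalois k K] (ρ : Gal(K/k) →* (A ≃+* A))
    (hsemi : ∀ (g : Gal(K/k)) (c : K) (a : A), ρ g (c • a) = g c • ρ g a)
    {ι : Type*} {v : ι → A} (hv : ∀ i g, ρ g (v i) = v i) (hli : LinearIndependent k v) :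
    LinearIndependent K v := by
  classical
  rw [linearIndependent_iff']
  intro s
  induction s using Finset.strongInduction with
  | H s ih =>
    intro c hc i hi
    by_contra hci
    set c' : ι → K := fun j => (c i)⁻¹ * c j
    have hc'i : c' i = 1 := inv_mul_cancel₀ hci
    have hrel : ∑ j ∈ s, c' j • v j = 0 := by
      simp only [c', mul_smul, ← Finset.smul_sum, hc, smul_zero]
    have hfix : ∀ j ∈ s, ∀ g : Gal(K/k), g (c' j) = c' j := by
      intro j hj g
      have hrel_g : ∑ l ∈ s, (g (c' l) - c' l) • v l = 0 := by
        have := congrArg (ρ g) hrel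
        simp only [map_sum, hsemi, hv, map_zero] at this
        simp only [sub_smul, Finset.sum_sub_distrib, this, hrel, sub_zero]
      rw [← Finset.add_sum_erase _ _ hi, hc'i, map_one, sub_self, zero_smul, zero_add] at hrel_g
      by_cases hji : j = i
      · rw [hji, hc'i, map_one]
      · exact sub_eq_zero.1 <|
          ih _ (Finset.erase_ssubset hi) _ hrel_g j (Finset.mem_erase.2 ⟨hji, hj⟩)
    have hdescend : ∀ j, ∃ d : k, j ∈ s → algebraMap k K d = c' j := fun j => by
      by_cases hj : j ∈ s
      · obtain ⟨d, hd⟩ := (InfiniteGalois.mem_range_algebraMap_iff_fixed _).2 (hfix j hj)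
        exact ⟨d, fun _ => hd⟩
      · exact ⟨0, fun h => absurd h hj⟩
    choose d hd using hdescend
    have hd0 : d i = 0 := by
      refine linearIndependent_iff'.1 hli s d ?_ i hi
      rw [← hrel]
      exact Finset.sum_congr rfl fun j hj => by rw [← hd j hj, algebraMap_smul]
    exact one_ne_zero (by rw [← hc'i, ← hd i hi, hd0, map_zero] : (1 : K) = 0)

theorem injective_productMap_galInvariants [IsGalois k K] (ρ : Gal(K/k) →* (A ≃+* A))
    (hsemi : ∀ (g : Gal(K/k)) (c : K) (a : A), ρ g (c • a) = g c • ρ g a) :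
    Injective (Algebra.TensorProduct.productMap
      (galInvariants ρ hsemi).val (IsScalarTower.toAlgHom k K A)) := by
  set V := galInvariants ρ hsemi
  let b := Module.Basis.ofVectorSpace k V
  have hli : LinearIndependent k fun i => (b i : A) :=
    b.linearIndependent.map' V.val.toLinearMap (LinearMap.ker_eq_bot.2 Subtype.val_injective)
  exact V.injective_productMap_of_linearIndependent b <|
    linearIndependent_of_forall_map_eq ρ hsemi (fun i => (b i).2) hli

section GalTrace

variable (L : IntermediateField k K)

theorem liftNormal_apply_coe [Normal k K] (σ : Gal(L/k)) (x : L) : σ.liftNormal K x = σ x :=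
  σ.liftNormal_commutes K x

variable [Normal k L]

theorem restrictNormalHom_liftNormal [Normal k K] (σ : Gal(L/k)) :
    AlgEquiv.restrictNormalHom L (σ.liftNormal K) = σ :=
  AlgEquiv.restrict_liftNormal K σ

variable {R : Type*} [NonUnitalNonAssocSemiring R]

theorem map_apply_eq_of_restrictNormalHom_eq (ρ : Gal(K/k) →* (R ≃+* R)) {x : R}
    (hx : ∀ g ∈ L.fixingSubgroup, ρ g x = x) {g g' : Gal(K/k)}
    (h : AlgEquiv.restrictNormalHom L g = AlgEquiv.restrictNormalHom L g') : ρ g x = ρ g' x := by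
  have hker : g'⁻¹ * g ∈ L.fixingSubgroup := by
    rw [← L.restrictNormalHom_ker, MonoidHom.mem_ker, map_mul, map_inv, h, inv_mul_cancel]
  calc ρ g x = ρ g' (ρ (g'⁻¹ * g) x) := by
        rw [← RingAut.mul_apply, ← map_mul, mul_inv_cancel_left]
    _ = ρ g' x := by rw [hx _ hker]

variable [Normal k K] [FiniteDimensional k L]

/-- On elements fixed by `Gal(K/L)` the choice of the lifts `σ.liftNormal K` is immaterial. -/
noncomputable def galTrace (ρ : Gal(K/k) →* (R ≃+* R)) (x : R) : R :=
  ∑ σ : Gal(L/k), ρ (σ.liftNormal K) x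

theorem map_galTrace (ρ : Gal(K/k) →* (R ≃+* R)) {x : R}
    (hx : ∀ g ∈ L.fixingSubgroup, ρ g x = x) (g : Gal(K/k)) :
    ρ g (galTrace L ρ x) = galTrace L ρ x := by
  simp only [galTrace, map_sum]
  refine Fintype.sum_equiv (Equiv.mulLeft (AlgEquiv.restrictNormalHom L g)) _ _ fun σ => ?_
  rw [← RingAut.mul_apply, ← map_mul]
  refine map_apply_eq_of_restrictNormalHom_eq L ρ hx ?_
  rw [map_mul, restrictNormalHom_liftNormal, restrictNormalHom_liftNormal]
  rfl

end GalTrace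

theorem mem_span_galInvariants [Normal k K] (ρ : Gal(K/k) →* (A ≃+* A))
    (hsemi : ∀ (g : Gal(K/k)) (c : K) (a : A), ρ g (c • a) = g c • ρ g a)
    (L : IntermediateField k K) [FiniteDimensional k L] [Normal k L] {a : A}
    (ha : ∀ g ∈ L.fixingSubgroup, ρ g a = a) :
    a ∈ Submodule.span K (galInvariants ρ hsemi : Set A) := by
  by_contra hspan
  obtain ⟨f, hfa, hf⟩ := Submodule.exists_le_ker_of_notMem hspan
  have htrace (μ : L) : galTrace L ρ ((μ : K) • a) ∈ galInvariants ρ hsemi :=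
    map_galTrace L ρ fun g hg => by
      rw [hsemi, (IntermediateField.mem_fixingSubgroup_iff _ _).1 hg μ μ.2, ha g hg]
  have hchar : ∑ σ : Gal(L/k), f (ρ (σ.liftNormal K) a) • (fun x : L => (σ x : K)) = 0 := by
    funext μ
    have := hf (Submodule.subset_span (htrace μ))
    simp only [LinearMap.mem_ker, galTrace, map_sum, hsemi, map_smul] at this
    simpa [liftNormal_apply_coe, mul_comm] using this
  have h1 := Fintype.linearIndependent_iff.1 (linearIndependent_algEquiv_apply L) _ hchar 1
  rw [map_apply_eq_of_restrictNormalHom_eq L ρ ha (g' := 1)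
    (by simp [restrictNormalHom_liftNormal]), map_one] at h1
  exact hfa h1

/-- Galois descent for algebras: if `K/k` is a separable closure and `A` is a
`K`-algebra with a semilinear continuous action of `Γ = Gal(K/k)`, then the
natural map `A^Γ ⊗_k K → A`, `a ⊗ λ ↦ λ • a`, is an isomorphism. -/
theorem stmt_12 [IsSepClosure k K]
    (ρ : (K ≃ₐ[k] K) →* (A ≃+* A))
    (hsemi : ∀ (g : K ≃ₐ[k] K) (c : K) (a : A), ρ g (c • a) = g c • ρ g a)
    (hcont : ∀ a : A, ∃ k' : IntermediateField k K, FiniteDimensional k k' ∧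
      ∀ g : K ≃ₐ[k] K, (∀ x ∈ k', g x = x) → ρ g a = a) :
    Function.Bijective
      (Algebra.TensorProduct.productMap
        (galInvariants ρ hsemi).val (IsScalarTower.toAlgHom k K A)) := by
  refine ⟨injective_productMap_galInvariants ρ hsemi, fun a => ?_⟩
  obtain ⟨k', _, ha⟩ := hcont a
  refine Subalgebra.span_subset_range_productMap _ <|
    mem_span_galInvariants ρ hsemi (normalClosure k k' K) fun g hg => ha g fun x hx => ?_
  exact (IntermediateField.mem_fixingSubgroup_iff _ _).1 hg x (le_normalClosure k' hx)
end
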